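/- With the β-data below, let k ∈ {1,…,d} and e ∈ {1,…,k(m+1)−1}, let e = kv + u be the Euclidean division of e by k, and set v_q = v+1 for q ∈ {1,…,u} and v_q = v for q ∈ {u+1,…,k}. Let 1 ≤ j₁ < j₂ < ⋯ < j_k ≤ d. Then for every q ∈ {1,…,k}: (K_{j_q, v_q − 1})^{c₂} ≤ K_{j_{u+1}, v_{u+1}} ≤ K_{j_q, v_q}. -/
import Mathlib


noncomputable section

open Finset

/-- `min_{ℓ ∈ {1,…,m+1}} β i ℓ`. -/
def βmin (m : ℕ) (β : ℕ → ℕ → ℝ) (i : ℕ) : ℝ :=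
  (Finset.Icc 1 (m + 1)).inf' (Finset.nonempty_Icc.mpr (by omega)) (β i)

/-- `max_{ℓ ∈ {1,…,m+1}} β i ℓ`. -/
def βmax (m : ℕ) (β : ℕ → ℕ → ℝ) (i : ℕ) : ℝ :=
  (Finset.Icc 1 (m + 1)).sup' (Finset.nonempty_Icc.mpr (by omega)) (β i)

/-- `K_{i,v} = max_{0 ≤ ℓ ≤ m+1−v} β_{i,ℓ+1} β_{i,ℓ+2} ⋯ β_{i,ℓ+v}` (so `K_{i,0} = 1`). -/
def Kprod (m : ℕ) (β : ℕ → ℕ → ℝ) (i v : ℕ) : ℝ :=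
  (Finset.Icc 0 (m + 1 - v)).sup' (Finset.nonempty_Icc.mpr (by omega))
    (fun ℓ => ∏ p ∈ Finset.Icc (ℓ + 1) (ℓ + v), β i p)

/-- `v_q`: with `e = k·(e/k) + (e % k)` the Euclidean division, `v_q = e/k + 1` for
`q ∈ {1,…,e % k}` and `v_q = e/k` for `q ∈ {e % k + 1,…,k}`. -/
def vq (e k q : ℕ) : ℕ := if q ≤ e % k then e / k + 1 else e / k

lemma βmin_le_apply (m : ℕ) (β : ℕ → ℕ → ℝ) (i ℓ : ℕ) (h1 : 1 ≤ ℓ) (h2 : ℓ ≤ m + 1) :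
    βmin m β i ≤ β i ℓ :=
  Finset.inf'_le _ (Finset.mem_Icc.mpr ⟨h1, h2⟩)

lemma apply_le_βmax (m : ℕ) (β : ℕ → ℕ → ℝ) (i ℓ : ℕ) (h1 : 1 ≤ ℓ) (h2 : ℓ ≤ m + 1) :
    β i ℓ ≤ βmax m β i :=
  Finset.le_sup' _ (Finset.mem_Icc.mpr ⟨h1, h2⟩)

lemma βmin_le_βmax (m : ℕ) (β : ℕ → ℕ → ℝ) (i : ℕ) : βmin m β i ≤ βmax m β i :=
  le_trans (βmin_le_apply m β i 1 le_rfl (by omega)) (apply_le_βmax m β i 1 le_rfl (by omega))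

lemma βmin_pos (m : ℕ) (β : ℕ → ℕ → ℝ) (i : ℕ)
    (hpos : ∀ ℓ, 1 ≤ ℓ → ℓ ≤ m + 1 → 0 < β i ℓ) : 0 < βmin m β i := by
  rw [βmin, Finset.lt_inf'_iff]
  intro ℓ hℓ
  rw [Finset.mem_Icc] at hℓ
  exact hpos ℓ hℓ.1 hℓ.2

lemma Kprod_le_pow (m : ℕ) (β : ℕ → ℕ → ℝ) (i s : ℕ) (hs : s ≤ m + 1)
    (hpos : ∀ ℓ, 1 ≤ ℓ → ℓ ≤ m + 1 → 0 < β i ℓ) :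
    Kprod m β i s ≤ (βmax m β i) ^ s := by
  apply Finset.sup'_le
  intro ℓ hℓ
  rw [Finset.mem_Icc] at hℓ
  calc ∏ p ∈ Finset.Icc (ℓ + 1) (ℓ + s), β i p
      ≤ ∏ p ∈ Finset.Icc (ℓ + 1) (ℓ + s), βmax m β i := by
        apply Finset.prod_le_prod
        · intro p hp
          rw [Finset.mem_Icc] at hp
          exact (hpos p (by omega) (by omega)).le
        · intro p hp
          rw [Finset.mem_Icc] at hp
          exact apply_le_βmax m β i p (by omega) (by omega)
    _ = (βmax m β i) ^ s := by
        rw [Finset.prod_const, Nat.card_Icc]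
        congr 1
        omega

lemma pow_le_Kprod (m : ℕ) (β : ℕ → ℕ → ℝ) (i t : ℕ) (ht : t ≤ m + 1)
    (hpos : ∀ ℓ, 1 ≤ ℓ → ℓ ≤ m + 1 → 0 < β i ℓ) :
    (βmin m β i) ^ t ≤ Kprod m β i t := by
  have h0 : (0 : ℕ) ∈ Finset.Icc 0 (m + 1 - t) := Finset.mem_Icc.mpr ⟨le_rfl, by omega⟩
  refine le_trans ?_ (Finset.le_sup' _ h0)
  simp only [zero_add]
  calc (βmin m β i) ^ t = ∏ _p ∈ Finset.Icc 1 t, βmin m β i := by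
        rw [Finset.prod_const, Nat.card_Icc, Nat.add_sub_cancel]
    _ ≤ ∏ p ∈ Finset.Icc 1 t, β i p := by
        apply Finset.prod_le_prod
        · intro p hp
          exact (βmin_pos m β i hpos).le
        · intro p hp
          rw [Finset.mem_Icc] at hp
          exact βmin_le_apply m β i p hp.1 (by omega)

lemma Kprod_pos (m : ℕ) (β : ℕ → ℕ → ℝ) (i t : ℕ) (ht : t ≤ m + 1)
    (hpos : ∀ ℓ, 1 ≤ ℓ → ℓ ≤ m + 1 → 0 < β i ℓ) : 0 < Kprod m β i t :=
  lt_of_lt_of_le (pow_pos (βmin_pos m β i hpos) t) (pow_le_Kprod m β i t ht hpos)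

/-- generic step: from `A ≤ B ^ E` deduce `A ^ x ≤ B ^ y` when `x * E ≤ y`. -/
lemma rpow_step (A B E x y : ℝ) (hA : 0 ≤ A) (hB : 1 ≤ B) (hAB : A ≤ B ^ E)
    (hx : 0 ≤ x) (hxy : x * E ≤ y) : A ^ x ≤ B ^ y := by
  calc A ^ x ≤ (B ^ E) ^ x := Real.rpow_le_rpow hA hAB hx
    _ = B ^ (E * x) := (Real.rpow_mul (by linarith) E x).symm
    _ ≤ B ^ y := Real.rpow_le_rpow_of_exponent_le hB (by linarith [mul_comm E x])

/-- the main reduction: `Kprod a s ^ γ ≤ Kprod b t` follows from a `βmax`/`βmin` bound. -/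
lemma Kprod_rpow_le_Kprod (m : ℕ) (β : ℕ → ℕ → ℝ) (a b s t : ℕ)
    (hs : s ≤ m + 1) (ht : t ≤ m + 1)
    (hposa : ∀ ℓ, 1 ≤ ℓ → ℓ ≤ m + 1 → 0 < β a ℓ)
    (hposb : ∀ ℓ, 1 ≤ ℓ → ℓ ≤ m + 1 → 0 < β b ℓ)
    (γ : ℝ) (hγ : 0 ≤ γ)
    (hmain : (βmax m β a) ^ ((s : ℝ) * γ) ≤ (βmin m β b) ^ ((t : ℝ))) :
    (Kprod m β a s) ^ γ ≤ Kprod m β b t := by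
  have hKa : 0 < Kprod m β a s := Kprod_pos m β a s hs hposa
  have hmaxa : 0 < βmax m β a :=
    lt_of_lt_of_le (βmin_pos m β a hposa) (βmin_le_βmax m β a)
  calc (Kprod m β a s) ^ γ
      ≤ ((βmax m β a) ^ s) ^ γ :=
        Real.rpow_le_rpow hKa.le (Kprod_le_pow m β a s hs hposa) hγ
    _ = (βmax m β a) ^ ((s : ℝ) * γ) := by
        rw [← Real.rpow_natCast (βmax m β a) s, ← Real.rpow_mul hmaxa.le]
    _ ≤ (βmin m β b) ^ ((t : ℝ)) := hmain
    _ = (βmin m β b) ^ t := Real.rpow_natCast _ t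
    _ ≤ Kprod m β b t := pow_le_Kprod m β b t ht hposb

/-- Under the hypotheses on the `β`-data (with `c₁ = (1+1/m)^{1/d}` and
`1 < c₂ < c₁`), for `k ∈ {1,…,d}`, `e ∈ {1,…,k(m+1)−1}` with Euclidean division
`e = kv + u`, and `1 ≤ j₁ < ⋯ < j_k ≤ d`, every `q ∈ {1,…,k}` satisfies
`(K_{j_q, v_q−1})^{c₂} ≤ K_{j_{u+1}, v_{u+1}} ≤ K_{j_q, v_q}`. -/
theorem statement18 (m d : ℕ) (hm : 1 ≤ m) (hd : 1 ≤ d) (c1 c2 : ℝ)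
    (hc1 : c1 = (1 + 1 / (m : ℝ)) ^ ((1 : ℝ) / (d : ℝ)))
    (hc2a : 1 < c2) (hc2b : c2 < c1)
    (β : ℕ → ℕ → ℝ)
    (hβpos : ∀ i, 1 ≤ i → i ≤ d → ∀ ℓ, 1 ≤ ℓ → ℓ ≤ m + 1 → 0 < β i ℓ)
    (h1a : (βmax m β 1) ^ (c2 / c1) ≤ βmin m β 1)
    (h1b : (3 * (d : ℝ)) ^ (c2 / (c2 - 1)) ≤ βmin m β 1)
    (h2 : ∀ i, 1 ≤ i → i ≤ d - 1 → βmax m β (i + 1) ≤ (βmin m β i) ^ c1)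
    (h3 : ∀ i, 1 ≤ i → i ≤ d - 1 → (βmax m β i) ^ c2 ≤ βmin m β (i + 1))
    (k : ℕ) (hk1 : 1 ≤ k) (hk2 : k ≤ d)
    (e : ℕ) (he1 : 1 ≤ e) (he2 : e ≤ k * (m + 1) - 1)
    (j : ℕ → ℕ)
    (hjrange : ∀ q, 1 ≤ q → q ≤ k → 1 ≤ j q ∧ j q ≤ d)
    (hjmono : ∀ q, 1 ≤ q → q < k → j q < j (q + 1)) :
    ∀ q, 1 ≤ q → q ≤ k →
      (Kprod m β (j q) (vq e k q - 1)) ^ c2 ≤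
          Kprod m β (j (e % k + 1)) (vq e k (e % k + 1)) ∧
        Kprod m β (j (e % k + 1)) (vq e k (e % k + 1)) ≤ Kprod m β (j q) (vq e k q) := by
  -- basic numeric facts
  have hc1one : 1 < c1 := lt_trans hc2a hc2b
  have hc2pos : 0 < c2 := lt_trans one_pos hc2a
  have hc2ne : c2 ≠ 0 := ne_of_gt hc2pos
  have hc1pos : 0 < c1 := lt_trans one_pos hc1one
  have hc1ne : c1 ≠ 0 := ne_of_gt hc1pos
  have hdR : (0:ℝ) < (d:ℝ) := by exact_mod_cast hd
  have hmR : (1:ℝ) ≤ (m:ℝ) := by exact_mod_cast hm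
  have hd1 : (1:ℝ) ≤ (d:ℝ) := by exact_mod_cast hd
  have hbase : (0:ℝ) ≤ 1 + 1/(m:ℝ) := by positivity
  have hc1d : c1 ^ d = 1 + 1/(m:ℝ) := by
    rw [hc1, ← Real.rpow_natCast ((1 + 1/(m:ℝ)) ^ ((1:ℝ)/(d:ℝ))) d,
      ← Real.rpow_mul hbase, one_div_mul_cancel (ne_of_gt hdR), Real.rpow_one]
  -- positivity of rows
  have hposrow : ∀ i, 1 ≤ i → i ≤ d → ∀ ℓ, 1 ≤ ℓ → ℓ ≤ m + 1 → 0 < β i ℓ := hβpos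
  -- 1 < βmin i
  have hone : ∀ i, 1 ≤ i → i ≤ d → 1 < βmin m β i := by
    intro i hi
    induction i, hi using Nat.le_induction with
    | base =>
      intro _
      refine lt_of_lt_of_le ?_ h1b
      rw [Real.one_lt_rpow_iff_of_pos (by positivity)]
      left
      refine ⟨by linarith, div_pos (by linarith) (by linarith)⟩
    | succ i hi ih =>
      intro hid
      have h1 : 1 < βmin m β i := ih (by omega)
      have h2' : 1 < βmax m β i := lt_of_lt_of_le h1 (βmin_le_βmax m β i)
      refine lt_of_lt_of_le ?_ (h3 i hi (by omega))
      rw [Real.one_lt_rpow_iff_of_pos (by linarith)]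
      exact Or.inl ⟨h2', hc2pos⟩
  -- βmin monotone in the row index
  have hmono : ∀ i i', 1 ≤ i → i ≤ i' → i' ≤ d → βmin m β i ≤ βmin m β i' := by
    intro i i' hi hii'
    induction i', hii' using Nat.le_induction with
    | base => intro _; exact le_rfl
    | succ i' hii' ih =>
      intro hi'd
      refine le_trans (ih (by omega)) ?_
      have h1 : 1 ≤ βmax m β i' :=
        le_trans (hone i' (by omega) (by omega)).le (βmin_le_βmax m β i')
      calc βmin m β i' ≤ βmax m β i' := βmin_le_βmax m β i'
        _ = (βmax m β i') ^ (1:ℝ) := (Real.rpow_one _).symm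
        _ ≤ (βmax m β i') ^ c2 := Real.rpow_le_rpow_of_exponent_le h1 hc2a.le
        _ ≤ βmin m β (i'+1) := h3 i' (by omega) (by omega)
  -- gap: strict increase of rows dominates c2-th power of the max
  have hgap : ∀ i i', 1 ≤ i → i < i' → i' ≤ d → (βmax m β i) ^ c2 ≤ βmin m β i' := by
    intro i i' hi hii' hi'd
    exact le_trans (h3 i hi (by omega)) (hmono (i+1) i' (by omega) (by omega) hi'd)
  -- within a row: βmax i ≤ βmin i ^ (c1/c2)
  have hmaxpos : ∀ i, 1 ≤ i → i ≤ d → 0 < βmax m β i := by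
    intro i hi hid
    exact lt_of_lt_of_le (βmin_pos m β i (hposrow i hi hid)) (βmin_le_βmax m β i)
  have hmaxmin : ∀ i, 1 ≤ i → i ≤ d → βmax m β i ≤ (βmin m β i) ^ (c1/c2) := by
    have base : βmax m β 1 ≤ (βmin m β 1) ^ (c1/c2) := by
      have hmx : 0 < βmax m β 1 := hmaxpos 1 le_rfl hd
      have key : βmax m β 1 = ((βmax m β 1) ^ (c2/c1)) ^ (c1/c2) := by
        rw [← Real.rpow_mul hmx.le, show c2/c1*(c1/c2) = 1 by field_simp, Real.rpow_one]
      rw [key]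
      exact Real.rpow_le_rpow (Real.rpow_nonneg hmx.le _) h1a (by positivity)
    have step : ∀ i, 1 ≤ i → i + 1 ≤ d → βmax m β (i+1) ≤ (βmin m β (i+1)) ^ (c1/c2) := by
      intro i hi hid
      have hminpos_i : 0 < βmin m β i := βmin_pos m β i (hposrow i hi (by omega))
      have hmin1 : 1 < βmin m β (i+1) := hone (i+1) (by omega) hid
      have hs1 : (βmin m β i) ^ c2 ≤ βmin m β (i+1) := by
        refine le_trans ?_ (h3 i hi (by omega))
        exact Real.rpow_le_rpow hminpos_i.le (βmin_le_βmax m β i) hc2pos.le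
      have hs2 : βmin m β i ≤ (βmin m β (i+1)) ^ (1/c2) := by
        have h' := Real.rpow_le_rpow (Real.rpow_nonneg hminpos_i.le c2) hs1
          (by positivity : (0:ℝ) ≤ 1/c2)
        rwa [← Real.rpow_mul hminpos_i.le, mul_one_div, div_self hc2ne, Real.rpow_one] at h'
      calc βmax m β (i+1) ≤ (βmin m β i) ^ c1 := h2 i hi (by omega)
        _ ≤ ((βmin m β (i+1)) ^ (1/c2)) ^ c1 :=
            Real.rpow_le_rpow hminpos_i.le hs2 hc1pos.le
        _ = (βmin m β (i+1)) ^ (c1/c2) := by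
            rw [← Real.rpow_mul (by linarith : (0:ℝ) ≤ βmin m β (i+1))]
            congr 1
            ring
    intro i hi hid
    rcases i with _ | i
    · omega
    rcases i with _ | i
    · exact base
    · exact step (i+1) (by omega) (by omega)
  -- chain of powers of c1 downwards
  have hchain : ∀ i g, 1 ≤ i → i + g ≤ d →
      βmin m β (i+g) ≤ (βmin m β i) ^ ((c1 ^ g : ℝ)) := by
    intro i g hi
    induction g with
    | zero =>
      intro _
      simp
    | succ g ih =>
      intro hgd
      have hminpos_i : 0 < βmin m β i := βmin_pos m β i (hposrow i hi (by omega))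
      calc βmin m β (i+(g+1)) ≤ βmax m β (i+(g+1)) := βmin_le_βmax m β _
        _ = βmax m β ((i+g)+1) := by ring_nf
        _ ≤ (βmin m β (i+g)) ^ c1 := h2 (i+g) (by omega) (by omega)
        _ ≤ ((βmin m β i) ^ ((c1 ^ g : ℝ))) ^ c1 :=
            Real.rpow_le_rpow (βmin_pos m β (i+g) (hposrow (i+g) (by omega) (by omega))).le
              (ih (by omega)) hc1pos.le
        _ = (βmin m β i) ^ ((c1 ^ (g+1) : ℝ)) := by
            rw [← Real.rpow_mul hminpos_i.le, ← pow_succ]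
  -- key bound: βmax i' ≤ βmin i ^ ((1+1/m)/c2) for i ≤ i'
  have hA : ∀ i i', 1 ≤ i → i ≤ i' → i' ≤ d →
      βmax m β i' ≤ (βmin m β i) ^ ((1 + 1/(m:ℝ))/c2) := by
    intro i i' hi hii' hi'd
    obtain ⟨g, rfl⟩ : ∃ g, i' = i + g := ⟨i' - i, by omega⟩
    have hone_i : 1 < βmin m β i := hone i hi (by omega)
    have hexp : c1 ^ g * (c1/c2) ≤ (1 + 1/(m:ℝ))/c2 := by
      rw [show c1 ^ g * (c1/c2) = c1 ^ (g+1)/c2 by rw [pow_succ]; ring]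
      have hp : c1 ^ (g+1) ≤ 1 + 1/(m:ℝ) := by
        rw [← hc1d]
        exact pow_le_pow_right₀ hc1one.le (by omega)
      exact (div_le_div_iff_of_pos_right hc2pos).mpr hp
    calc βmax m β (i+g) ≤ (βmin m β (i+g)) ^ (c1/c2) := hmaxmin (i+g) (by omega) hi'd
      _ ≤ ((βmin m β i) ^ ((c1 ^ g : ℝ))) ^ (c1/c2) :=
          Real.rpow_le_rpow (βmin_pos m β (i+g) (hposrow (i+g) (by omega) hi'd)).le
            (hchain i g hi hi'd) (by positivity)
      _ = (βmin m β i) ^ ((c1 ^ g : ℝ) * (c1/c2)) := by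
          rw [← Real.rpow_mul (by linarith : (0:ℝ) ≤ βmin m β i)]
      _ ≤ (βmin m β i) ^ ((1 + 1/(m:ℝ))/c2) :=
          Real.rpow_le_rpow_of_exponent_le hone_i.le hexp
  -- monotonicity of j
  have hjle : ∀ p r, 1 ≤ p → p ≤ r → r ≤ k → j p ≤ j r := by
    intro p r hp hpr
    induction r, hpr using Nat.le_induction with
    | base => intro _; exact le_rfl
    | succ r hpr ih =>
      intro hrk
      exact le_trans (ih (by omega)) (hjmono r (by omega) (by omega)).le
  have hjlt : ∀ p r, 1 ≤ p → p < r → r ≤ k → j p < j r := by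
    intro p r hp hpr hrk
    have h1 : j p ≤ j (r-1) := hjle p (r-1) hp (by omega) (by omega)
    have h2' : j (r-1) < j (r-1+1) := hjmono (r-1) (by omega) (by omega)
    have hr : r - 1 + 1 = r := by omega
    rw [hr] at h2'
    omega
  intro q hq1 hq2
  have hu_lt : e % k < k := Nat.mod_lt e hk1
  have hkm : 0 < k * (m+1) := Nat.mul_pos hk1 (Nat.succ_pos m)
  have helt : e < k * (m+1) := lt_of_le_of_lt he2 (Nat.sub_lt hkm one_pos)
  have hvm : e / k ≤ m := by
    have h' : e / k < m + 1 := (Nat.div_lt_iff_lt_mul hk1).mpr (by rwa [Nat.mul_comm] at helt)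
    omega
  have hbq1 : 1 ≤ j (e % k + 1) := (hjrange (e%k+1) (by omega) (by omega)).1
  have hbq2 : j (e % k + 1) ≤ d := (hjrange (e%k+1) (by omega) (by omega)).2
  have haq1 : 1 ≤ j q := (hjrange q hq1 hq2).1
  have haq2 : j q ≤ d := (hjrange q hq1 hq2).2
  have hvq_b : vq e k (e % k + 1) = e / k := by unfold vq; rw [if_neg (by omega)]
  rw [hvq_b]
  have honeb : 1 < βmin m β (j (e%k+1)) := hone _ hbq1 hbq2
  have hmne : (m:ℝ) ≠ 0 := by positivity
  by_cases hqu : q ≤ e % k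
  · have hvq_q : vq e k q = e / k + 1 := by unfold vq; rw [if_pos hqu]
    rw [hvq_q]
    have hlt' : j q < j (e%k+1) := hjlt q (e%k+1) hq1 (by omega) (by omega)
    constructor
    · have hs : e/k + 1 - 1 = e/k := by omega
      rw [hs]
      apply Kprod_rpow_le_Kprod m β _ _ _ _ (by omega) (by omega)
        (hposrow _ haq1 haq2) (hposrow _ hbq1 hbq2) c2 hc2pos.le
      have hg := hgap (j q) (j (e%k+1)) haq1 hlt' hbq2
      have hmx : 0 < βmax m β (j q) := hmaxpos _ haq1 haq2
      have hE : βmax m β (j q) ≤ (βmin m β (j (e%k+1))) ^ (1/c2) := by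
        have h' := Real.rpow_le_rpow (Real.rpow_nonneg hmx.le c2) hg
          (by positivity : (0:ℝ) ≤ 1/c2)
        rwa [← Real.rpow_mul hmx.le, mul_one_div, div_self hc2ne, Real.rpow_one] at h'
      apply rpow_step _ _ _ _ _ hmx.le honeb.le hE
        (mul_nonneg (Nat.cast_nonneg _) hc2pos.le)
      rw [mul_one_div, mul_div_assoc, div_self hc2ne, mul_one]
    · rw [← Real.rpow_one (Kprod m β (j (e%k+1)) (e/k))]
      apply Kprod_rpow_le_Kprod m β _ _ _ _ (by omega) (by omega)
        (hposrow _ hbq1 hbq2) (hposrow _ haq1 haq2) 1 zero_le_one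
      have honea : 1 < βmin m β (j q) := hone _ haq1 haq2
      have hE := hA (j q) (j (e%k+1)) haq1 hlt'.le hbq2
      have hmxb : 0 < βmax m β (j (e%k+1)) := hmaxpos _ hbq1 hbq2
      apply rpow_step _ _ _ _ _ hmxb.le honea.le hE
        (mul_nonneg (Nat.cast_nonneg _) zero_le_one)
      have hvm' : ((e/k : ℕ):ℝ) ≤ (m:ℝ) := by exact_mod_cast hvm
      have hdiv : (1+1/(m:ℝ))/c2 ≤ 1+1/(m:ℝ) := div_le_self (by positivity) hc2a.le
      have hmul : ((e/k:ℕ):ℝ) * (1+1/(m:ℝ)) ≤ ((e/k:ℕ):ℝ) + 1 := by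
        have hfr : ((e/k:ℕ):ℝ)/(m:ℝ) ≤ 1 := (div_le_one (by linarith)).mpr hvm'
        have heq : ((e/k:ℕ):ℝ) * (1+1/(m:ℝ)) = ((e/k:ℕ):ℝ) + ((e/k:ℕ):ℝ)/(m:ℝ) := by
          ring
        rw [heq]; linarith
      push_cast
      calc ((e/k:ℕ):ℝ) * 1 * ((1+1/(m:ℝ))/c2)
          = ((e/k:ℕ):ℝ) * ((1+1/(m:ℝ))/c2) := by ring
        _ ≤ ((e/k:ℕ):ℝ) * (1+1/(m:ℝ)) :=
            mul_le_mul_of_nonneg_left hdiv (Nat.cast_nonneg _)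
        _ ≤ ((e/k:ℕ):ℝ) + 1 := hmul
  · have hvq_q : vq e k q = e / k := by unfold vq; rw [if_neg hqu]
    rw [hvq_q]
    have hle' : j (e%k+1) ≤ j q := by
      rcases Nat.lt_or_ge (e%k+1) q with h | h
      · exact (hjlt (e%k+1) q (by omega) h hq2).le
      · have hq : q = e%k+1 := by omega
        rw [hq]
    constructor
    · apply Kprod_rpow_le_Kprod m β _ _ _ _ (by omega) (by omega)
        (hposrow _ haq1 haq2) (hposrow _ hbq1 hbq2) c2 hc2pos.le
      have hE := hA (j (e%k+1)) (j q) hbq1 hle' haq2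
      have hmx : 0 < βmax m β (j q) := hmaxpos _ haq1 haq2
      apply rpow_step _ _ _ _ _ hmx.le honeb.le hE
        (mul_nonneg (Nat.cast_nonneg _) hc2pos.le)
      have heq : ((e/k-1:ℕ):ℝ) * c2 * ((1+1/(m:ℝ))/c2)
          = ((e/k-1:ℕ):ℝ) * (1+1/(m:ℝ)) := by
        field_simp
      rw [heq]
      rcases Nat.eq_zero_or_pos (e/k) with h0 | h0
      · simp [h0]
      · have hc : ((e/k-1:ℕ):ℝ) = ((e/k:ℕ):ℝ) - 1 := by
          rw [Nat.cast_sub h0, Nat.cast_one]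
        rw [hc]
        have hvm' : ((e/k:ℕ):ℝ) ≤ (m:ℝ) := by exact_mod_cast hvm
        have hfr : (((e/k:ℕ):ℝ)-1)/(m:ℝ) ≤ 1 := by
          rw [div_le_one (by linarith)]
          linarith
        have heq2 : (((e/k:ℕ):ℝ)-1) * (1+1/(m:ℝ))
            = (((e/k:ℕ):ℝ)-1) + (((e/k:ℕ):ℝ)-1)/(m:ℝ) := by ring
        rw [heq2]
        linarith
    · rcases eq_or_lt_of_le (show e%k+1 ≤ q by omega) with hqe | hqe
      · rw [← hqe]
      · rw [← Real.rpow_one (Kprod m β (j (e%k+1)) (e/k))]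
        apply Kprod_rpow_le_Kprod m β _ _ _ _ (by omega) (by omega)
          (hposrow _ hbq1 hbq2) (hposrow _ haq1 haq2) 1 zero_le_one
        have honea : 1 < βmin m β (j q) := hone _ haq1 haq2
        have hltq : j (e%k+1) < j q := hjlt (e%k+1) q (by omega) hqe hq2
        have hg := hgap (j (e%k+1)) (j q) hbq1 hltq haq2
        have hmxb1 : 1 ≤ βmax m β (j (e%k+1)) :=
          le_trans honeb.le (βmin_le_βmax m β _)
        have hE : βmax m β (j (e%k+1)) ≤ (βmin m β (j q)) ^ (1:ℝ) := by
          rw [Real.rpow_one]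
          calc βmax m β (j (e%k+1)) = (βmax m β (j (e%k+1))) ^ (1:ℝ) :=
                (Real.rpow_one _).symm
            _ ≤ (βmax m β (j (e%k+1))) ^ c2 :=
                Real.rpow_le_rpow_of_exponent_le hmxb1 hc2a.le
            _ ≤ βmin m β (j q) := hg
        apply rpow_step _ _ _ _ _ (by linarith : (0:ℝ) ≤ βmax m β (j (e%k+1)))
          honea.le hE (mul_nonneg (Nat.cast_nonneg _) zero_le_one)
        rw [mul_one, mul_one]
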